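/- arXiv:1902.08420 — 6 statements merged into one kernel-verified Lean document; each statement's English description precedes it below -/
import Mathlib

section
/- In the calculus Simple, the standard reduction is deterministic: for all Simple expressions e, e1, e2, if e →sr e1 and e →sr e2, then e1 = e2. -/
/-- Expressions of the calculus `Simple`: `e ::= ⊥ | ⊤ | ¬e | e ∧ e`. -/
inductive SExp : Type where
  | bot : SExp
  | top : SExp
  | neg : SExp → SExp
  | and : SExp → SExp → SExp

/-- Evaluation contexts: `A ::= [·] | ¬A | A ∧ e`. -/
inductive ECtx : Type where
  | hole : ECtx
  | neg : ECtx → ECtx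
  | and : ECtx → SExp → ECtx

/-- Hole filling for evaluation contexts. -/
def ECtx.fill : ECtx → SExp → SExp
  | .hole, e => e
  | .neg A, e => .neg (A.fill e)
  | .and A t, e => .and (A.fill e) t

/-- General contexts: `C ::= [·] | ¬C | C ∧ e | e ∧ C`. -/
inductive GCtx : Type where
  | hole : GCtx
  | neg : GCtx → GCtx
  | andL : GCtx → SExp → GCtx
  | andR : SExp → GCtx → GCtx

/-- Hole filling for general contexts. -/
def GCtx.fill : GCtx → SExp → SExp
  | .hole, e => e
  | .neg C, e => .neg (C.fill e)
  | .andL C t, e => .and (C.fill e) t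
  | .andR t C, e => .and t (C.fill e)

/-- Labels of the standard-reduction rules. -/
inductive SRLab : Type where
  | bot | top | neg1 | neg2

/-- The labelled standard reduction rules of `Simple`. -/
inductive SRL : SRLab → SExp → SExp → Prop where
  | bot (A : ECtx) (e : SExp) : SRL .bot (A.fill (.and .bot e)) (A.fill .bot)
  | top (A : ECtx) (e : SExp) : SRL .top (A.fill (.and .top e)) (A.fill e)
  | neg1 (A : ECtx) : SRL .neg1 (A.fill (.neg .top)) (A.fill .bot)
  | neg2 (A : ECtx) : SRL .neg2 (A.fill (.neg .bot)) (A.fill .top)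

/-- The standard reduction `→sr` (union of the four rules). -/
def SR (e e' : SExp) : Prop := ∃ a, SRL a e e'

/-- The transformation `(top)`: `C[⊤ ∧ e] →top C[e]` for all general contexts `C`. -/
inductive TopT : SExp → SExp → Prop where
  | mk (C : GCtx) (e : SExp) : TopT (C.fill (.and .top e)) (C.fill e)

/-- Convergence: `e ↓` iff `e →sr* ⊤`. -/
def SConv (e : SExp) : Prop := Relation.ReflTransGen SR e .top

/-! Every step `A[r] →sr A[c]` contracts a redex `r` inside an evaluation context. The evaluation
position of a redex (the argument of `¬`, the left conjunct of `∧`) holds `⊥` or `⊤`, while a filled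
context `A[r']` with `r'` a redex is never `⊥` or `⊤`; so no redex contains another one in evaluation
position, and an expression splits into an evaluation context and a redex in at most one way. Each
redex has a single contractum. -/

inductive Redex : SExp → SExp → Prop where
  | bot (e : SExp) : Redex (.and .bot e) .bot
  | top (e : SExp) : Redex (.and .top e) e
  | neg1 : Redex (.neg .top) .bot
  | neg2 : Redex (.neg .bot) .top

namespace Redex

variable {r c c' : SExp}

theorem functional (h : Redex r c) (h' : Redex r c') : c = c' := by
  cases h <;> cases h' <;> rfl

theorem bot_ne_fill (h : Redex r c) (A : ECtx) : .bot ≠ A.fill r := by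
  cases A <;> cases h <;> simp [ECtx.fill]

theorem top_ne_fill (h : Redex r c) (A : ECtx) : .top ≠ A.fill r := by
  cases A <;> cases h <;> simp [ECtx.fill]

theorem eq_hole_of_eq_fill {A : ECtx} {r' c' : SExp} (h : Redex r c) (h' : Redex r' c')
    (he : r = A.fill r') : A = .hole := by
  cases A with
  | hole => rfl
  | _ => cases h <;> simp [ECtx.fill, h'.bot_ne_fill, h'.top_ne_fill] at he

end Redex

theorem ECtx.eq_of_fill_redex_eq {A A' : ECtx} {r c r' c' : SExp} (h : Redex r c)
    (h' : Redex r' c') (he : A.fill r = A'.fill r') : A = A' ∧ r = r' := by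
  induction A generalizing A' with
  | hole =>
    obtain rfl := h.eq_hole_of_eq_fill h' he
    exact ⟨rfl, he⟩
  | neg A ih =>
    cases A' with
    | hole => cases h'.eq_hole_of_eq_fill h he.symm
    | neg A' =>
      simp only [ECtx.fill, SExp.neg.injEq] at he
      obtain ⟨rfl, rfl⟩ := ih he
      exact ⟨rfl, rfl⟩
    | and => simp [ECtx.fill] at he
  | and A t ih =>
    cases A' with
    | hole => cases h'.eq_hole_of_eq_fill h he.symm
    | neg => simp [ECtx.fill] at he
    | and A' t' =>
      simp only [ECtx.fill, SExp.and.injEq] at he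
      obtain ⟨he, rfl⟩ := he
      obtain ⟨rfl, rfl⟩ := ih he
      exact ⟨rfl, rfl⟩

theorem SRL.exists_redex {a : SRLab} {e e' : SExp} (h : SRL a e e') :
    ∃ (A : ECtx) (r c : SExp), Redex r c ∧ e = A.fill r ∧ e' = A.fill c := by
  cases h with
  | bot A e => exact ⟨A, _, _, .bot e, rfl, rfl⟩
  | top A e => exact ⟨A, _, _, .top e, rfl, rfl⟩
  | neg1 A => exact ⟨A, _, _, .neg1, rfl, rfl⟩
  | neg2 A => exact ⟨A, _, _, .neg2, rfl, rfl⟩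

/-- the standard reduction of `Simple` is deterministic. -/
theorem simple_sr_deterministic :
    ∀ e e1 e2 : SExp, SR e e1 → SR e e2 → e1 = e2 := by
  rintro e e1 e2 ⟨_, h₁⟩ ⟨_, h₂⟩
  obtain ⟨A, r, c, hr, rfl, rfl⟩ := h₁.exists_redex
  obtain ⟨A', r', c', hr', he, rfl⟩ := h₂.exists_redex
  obtain ⟨rfl, rfl⟩ := ECtx.eq_of_fill_redex_eq hr hr' he
  rw [hr.functional hr']
end

section
/- In the calculus Simple, the expressions ⊤ and ⊥ have no →sr-successor, and every other expression has exactly one →sr-successor: for every Simple expression e with e ≠ ⊤ and e ≠ ⊥ there exists a unique e' such that e →sr e'. -/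
/-!
Descending the left spine `¬·`, `· ∧ e` of an expression one either reaches `⊤` or `⊥` at the
top, or first meets one of the redexes `¬⊤`, `¬⊥`, `⊥ ∧ e`, `⊤ ∧ e`; the path taken is an
evaluation context. Hence `→sr` is the graph of the partial function `SExp.step` below, and
`step` is undefined exactly on `⊤` and `⊥`.
-/

def SExp.step : SExp → Option SExp
  | .bot | .top => none
  | .neg .top => some .bot
  | .neg .bot => some .top
  | .neg e => e.step.map .neg
  | .and .bot _ => some .bot
  | .and .top e => some e
  | .and e t => e.step.map (.and · t)

namespace SExp

theorem step_neg {e e' : SExp} (h : e.step = some e') : (neg e).step = some (neg e') := by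
  cases e <;> simp_all [step]

theorem step_and {e e' : SExp} (t : SExp) (h : e.step = some e') :
    (and e t).step = some (and e' t) := by
  cases e <;> simp_all [step]

theorem step_eq_none_iff {e : SExp} : e.step = none ↔ e = top ∨ e = bot := by
  induction e with
  | bot | top => simp [step]
  | neg e ih => cases e <;> simp_all [step]
  | and e t ih => cases e <;> simp_all [step]

end SExp

theorem ECtx.step_fill (A : ECtx) {e e' : SExp} (h : e.step = some e') :
    (A.fill e).step = some (A.fill e') := by
  induction A with
  | hole => exact h
  | neg A ih => exact SExp.step_neg ih
  | and A t ih => exact SExp.step_and t ih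

theorem SRL.neg {a : SRLab} {e e' : SExp} (h : SRL a e e') : SRL a (.neg e) (.neg e') := by
  rcases h with ⟨A, t⟩ | ⟨A, t⟩ | A | A
  exacts [.bot A.neg t, .top A.neg t, .neg1 A.neg, .neg2 A.neg]

theorem SRL.and {a : SRLab} {e e' : SExp} (t : SExp) (h : SRL a e e') :
    SRL a (.and e t) (.and e' t) := by
  rcases h with ⟨A, s⟩ | ⟨A, s⟩ | A | A
  exacts [.bot (A.and t) s, .top (A.and t) s, .neg1 (A.and t), .neg2 (A.and t)]

theorem SR.step_eq {e e' : SExp} (h : SR e e') : e.step = some e' := by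
  obtain ⟨_, ⟨A, t⟩ | ⟨A, t⟩ | A | A⟩ := h <;> exact A.step_fill rfl

theorem SR.neg {e e' : SExp} (h : SR e e') : SR (.neg e) (.neg e') :=
  h.imp fun _ => SRL.neg

theorem SR.and {e e' : SExp} (t : SExp) (h : SR e e') : SR (.and e t) (.and e' t) :=
  h.imp fun _ => SRL.and t

theorem SR.of_step_eq {e e' : SExp} (h : e.step = some e') : SR e e' := by
  induction e generalizing e' with
  | bot | top => cases h
  | neg e ih =>
    rcases e with _ | _ | _ | _
    · cases h; exact ⟨_, .neg2 .hole⟩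
    · cases h; exact ⟨_, .neg1 .hole⟩
    all_goals
      obtain ⟨e'', he'', rfl⟩ := Option.map_eq_some_iff.mp h
      exact (ih he'').neg
  | and e t ih =>
    rcases e with _ | _ | _ | _
    · cases h; exact ⟨_, .bot .hole t⟩
    · cases h; exact ⟨_, .top .hole t⟩
    all_goals
      obtain ⟨e'', he'', rfl⟩ := Option.map_eq_some_iff.mp h
      exact (ih he'').and t

theorem sr_iff_step_eq {e e' : SExp} : SR e e' ↔ e.step = some e' :=
  ⟨SR.step_eq, SR.of_step_eq⟩

/-- `⊤` and `⊥` have no `→sr`-successor, and every other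
expression has exactly one `→sr`-successor. -/
theorem simple_sr_progress_unique :
    (¬ ∃ e', SR .top e') ∧ (¬ ∃ e', SR .bot e') ∧
      (∀ e : SExp, e ≠ .top → e ≠ .bot → ∃! e', SR e e') := by
  simp only [sr_iff_step_eq]
  refine ⟨by simp [SExp.step], by simp [SExp.step], fun e htop hbot => ?_⟩
  have hstep : e.step ≠ none := by simp [SExp.step_eq_none_iff, htop, hbot]
  obtain ⟨e', he⟩ := Option.ne_none_iff_exists'.mp hstep
  exact ⟨e', he, fun _ h => Option.some_injective _ (h.symm.trans he)⟩
end

section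
/- The transformation (top) in Simple preserves convergence: for all Simple expressions e1, e2, if e1 →top e2 and e1↓, then e2↓. -/
/- Every expression of `Simple` denotes a truth value, standard reduction preserves it, and every
expression reduces to the value it denotes. Hence `e↓` holds exactly when `e` denotes `true`; since
`⊤ ∧ e` and `e` denote the same value in every context, `(top)` preserves convergence. -/

namespace SExp

def eval : SExp → Bool
  | .bot => false
  | .top => true
  | .neg e => !e.eval
  | .and a b => a.eval && b.eval

def ofBool (b : Bool) : SExp := if b then .top else .bot

end SExp

open Relation SExp

theorem ECtx.eval_fill_congr (A : ECtx) {x y : SExp} (h : x.eval = y.eval) :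
    (A.fill x).eval = (A.fill y).eval := by
  induction A with
  | hole => exact h
  | neg A ih => simp only [ECtx.fill, eval, ih]
  | and A t ih => simp only [ECtx.fill, eval, ih]

theorem GCtx.eval_fill_congr (C : GCtx) {x y : SExp} (h : x.eval = y.eval) :
    (C.fill x).eval = (C.fill y).eval := by
  induction C with
  | hole => exact h
  | neg C ih => simp only [GCtx.fill, eval, ih]
  | andL C t ih => simp only [GCtx.fill, eval, ih]
  | andR t C ih => simp only [GCtx.fill, eval, ih]

theorem SR.eval_eq {e e' : SExp} (h : SR e e') : e.eval = e'.eval := by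
  obtain ⟨_, h⟩ := h
  cases h <;> exact ECtx.eval_fill_congr _ (by simp [eval])

theorem TopT.eval_eq {e e' : SExp} (h : TopT e e') : e.eval = e'.eval := by
  cases h with
  | mk C e => exact GCtx.eval_fill_congr C (by simp [eval])

def ECtx.comp : ECtx → ECtx → ECtx
  | .hole, B => B
  | .neg A, B => .neg (A.comp B)
  | .and A t, B => .and (A.comp B) t

theorem ECtx.fill_comp (A B : ECtx) (e : SExp) : (A.comp B).fill e = A.fill (B.fill e) := by
  induction A with
  | hole => rfl
  | neg A ih => simp only [ECtx.comp, ECtx.fill, ih]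
  | and A t ih => simp only [ECtx.comp, ECtx.fill, ih]

theorem SR.fill (A : ECtx) {e e' : SExp} (h : SR e e') : SR (A.fill e) (A.fill e') := by
  obtain ⟨_, h⟩ := h
  cases h with
  | bot B t => exact ⟨_, by simpa only [ECtx.fill_comp] using SRL.bot (A.comp B) t⟩
  | top B t => exact ⟨_, by simpa only [ECtx.fill_comp] using SRL.top (A.comp B) t⟩
  | neg1 B => exact ⟨_, by simpa only [ECtx.fill_comp] using SRL.neg1 (A.comp B)⟩
  | neg2 B => exact ⟨_, by simpa only [ECtx.fill_comp] using SRL.neg2 (A.comp B)⟩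

theorem reflTransGen_SR_fill (A : ECtx) {e e' : SExp} (h : ReflTransGen SR e e') :
    ReflTransGen SR (A.fill e) (A.fill e') :=
  ReflTransGen.lift A.fill (fun _ _ => SR.fill A) _ _ h

theorem SR.neg_ofBool (b : Bool) : SR (.neg (ofBool b)) (ofBool !b) := by
  cases b
  · exact ⟨_, SRL.neg2 .hole⟩
  · exact ⟨_, SRL.neg1 .hole⟩

theorem reflTransGen_SR_and_ofBool (b : Bool) {e : SExp} (he : ReflTransGen SR e (ofBool e.eval)) :
    ReflTransGen SR (.and (ofBool b) e) (ofBool (b && e.eval)) := by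
  cases b
  · exact .single ⟨_, SRL.bot .hole e⟩
  · exact .head ⟨_, SRL.top .hole e⟩ he

theorem reflTransGen_SR_ofBool_eval (e : SExp) : ReflTransGen SR e (ofBool e.eval) := by
  induction e with
  | bot | top => exact .refl
  | neg e ih => exact (reflTransGen_SR_fill (.neg .hole) ih).tail (SR.neg_ofBool _)
  | and a b iha ihb =>
    exact (reflTransGen_SR_fill (.and .hole b) iha).trans (reflTransGen_SR_and_ofBool _ ihb)

theorem sConv_iff_eval {e : SExp} : SConv e ↔ e.eval = true := by
  constructor
  · intro h
    induction h using ReflTransGen.head_induction_on with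
    | refl => rfl
    | head hstep _ ih => rw [hstep.eval_eq, ih]
  · intro h
    simpa only [SConv, h, ofBool, if_true] using reflTransGen_SR_ofBool_eval e

/-- the transformation `(top)` preserves convergence. -/
theorem simple_top_preserves_convergence :
    ∀ e1 e2 : SExp, TopT e1 e2 → SConv e1 → SConv e2 := by
  intro e1 e2 htop hconv
  rw [sConv_iff_eval, ← htop.eval_eq]
  exact sConv_iff_eval.mp hconv
end

section
/- Abstract forking-diagram induction lemma: let E be a type, SR and T binary relations on E, and Ans a predicate on E; write e↓ iff there exists a with Ans a and SR* e a (reflexive-transitive closure of SR). Assume (i) for all e, t: if Ans e and T e t then t↓; and (ii) for all e, e1, e2: if SR e e1 and T e e2, then SR* e2 e1, or there exists e' with T e1 e' and SR* e2 e'. Then for all e, t: if T e t and e↓, then t↓. -/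
/-! Induction on the `SR`-reduction `e →* a` to an answer, generalizing over the `T`-successor
`t`. At an answer, (i) applies. For a first step `e → e₁`, the fork (ii) either reduces `t`
into `e₁ →* a` directly, or yields a `T`-successor `e'` of `e₁` with `t →* e'`, and the induction
hypothesis for `e₁` makes `e'`, hence `t`, converge. -/

/-- abstract forking-diagram induction lemma.
`e↓` is written out as `∃ a, Ans a ∧ Relation.ReflTransGen SR e a`. -/
theorem abstract_forking_diagram_induction {E : Type*}
    (SR T : E → E → Prop) (Ans : E → Prop)
    (hans : ∀ e t, Ans e → T e t → ∃ a, Ans a ∧ Relation.ReflTransGen SR t a)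
    (hfork : ∀ e e1 e2, SR e e1 → T e e2 →
      Relation.ReflTransGen SR e2 e1 ∨
        ∃ e', T e1 e' ∧ Relation.ReflTransGen SR e2 e') :
    ∀ e t, T e t → (∃ a, Ans a ∧ Relation.ReflTransGen SR e a) →
      ∃ a, Ans a ∧ Relation.ReflTransGen SR t a := by
  rintro e t het ⟨a, ha, hea⟩
  induction hea using Relation.ReflTransGen.head_induction_on generalizing t with
  | refl => exact hans a t ha het
  | head hstep hrest ih =>
    rcases hfork _ _ _ hstep het with hjoin | ⟨e', he', hte'⟩
    · exact ⟨a, ha, hjoin.trans hrest⟩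
    · obtain ⟨a', ha', hra'⟩ := ih e' he'
      exact ⟨a', ha', hte'.trans hra'⟩
end

section
/- Abstract convergence equivalence via diagrams: let E be a type, SR and T binary relations on E, and Ans a predicate on E; write e↓ iff there exists a with Ans a and SR* e a. Assume (i) for all e, t: if Ans e and T e t then t↓; (ii) for all e, e1, e2: if SR e e1 and T e e2, then SR* e2 e1 or there exists e' with T e1 e' and SR* e2 e'; (iii) for all e, t: if T e t and Ans t then e↓; and (iv) for all e, t, t': if T e t and SR t t', then there exists e' with SR* e e' and (e' = t' or T e' t'). Then T is convergence equivalent: for all e, t with T e t, e↓ ⇔ t↓. -/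
/-! Both directions are one induction along the reduction sequence to an answer. A relation `R`
(`T` for `⇒`, its converse for `⇐`) that turns answers into convergent terms and whose `R`-related
term can follow every standard-reduction step, possibly dropping out of `R` by reaching the reduct
directly, transports convergence along `R`. -/

open Relation

section Convergence

variable {E : Type*} (SR : E → E → Prop) (Ans : E → Prop)

def Converges (e : E) : Prop :=
  ∃ a, Ans a ∧ ReflTransGen SR e a

variable {SR Ans}

theorem Converges.head {e e' : E} (hr : ReflTransGen SR e e') (h : Converges SR Ans e') :
    Converges SR Ans e :=
  let ⟨a, ha, hr'⟩ := h
  ⟨a, ha, hr.trans hr'⟩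

theorem Converges.of_rel (R : E → E → Prop)
    (base : ∀ a b, Ans a → R a b → Converges SR Ans b)
    (step : ∀ x y z, SR x y → R x z →
      ReflTransGen SR z y ∨ ∃ w, ReflTransGen SR z w ∧ R y w)
    {x z : E} (hx : Converges SR Ans x) (hR : R x z) : Converges SR Ans z := by
  obtain ⟨a, ha, hr⟩ := hx
  induction hr using ReflTransGen.head_induction_on generalizing z with
  | refl => exact base a z ha hR
  | head hxy hya ih =>
    rcases step _ _ z hxy hR with hzy | ⟨w, hzw, hyw⟩
    · exact ⟨a, ha, hzy.trans hya⟩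
    · exact (ih hyw).head hzw

end Convergence

/-- abstract convergence equivalence via diagrams.
`e↓` is written out as `∃ a, Ans a ∧ Relation.ReflTransGen SR e a`. -/
theorem abstract_convergence_equivalence {E : Type*}
    (SR T : E → E → Prop) (Ans : E → Prop)
    (h1 : ∀ e t, Ans e → T e t → ∃ a, Ans a ∧ Relation.ReflTransGen SR t a)
    (h2 : ∀ e e1 e2, SR e e1 → T e e2 →
      Relation.ReflTransGen SR e2 e1 ∨
        ∃ e', T e1 e' ∧ Relation.ReflTransGen SR e2 e')
    (h3 : ∀ e t, T e t → Ans t → ∃ a, Ans a ∧ Relation.ReflTransGen SR e a)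
    (h4 : ∀ e t t', T e t → SR t t' →
      ∃ e', Relation.ReflTransGen SR e e' ∧ (e' = t' ∨ T e' t')) :
    ∀ e t, T e t →
      ((∃ a, Ans a ∧ Relation.ReflTransGen SR e a) ↔
        (∃ a, Ans a ∧ Relation.ReflTransGen SR t a)) := by
  intro e t ht
  have forward_step : ∀ x y z, SR x y → T x z →
      ReflTransGen SR z y ∨ ∃ w, ReflTransGen SR z w ∧ T y w := fun x y z hxy hxz =>
    (h2 x y z hxy hxz).imp_right fun ⟨w, hyw, hzw⟩ => ⟨w, hzw, hyw⟩
  have backward_step : ∀ x y z, SR x y → T z x →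
      ReflTransGen SR z y ∨ ∃ w, ReflTransGen SR z w ∧ T w y := by
    intro x y z hxy hzx
    obtain ⟨w, hzw, rfl | hwy⟩ := h4 z x y hzx hxy
    · exact .inl hzw
    · exact .inr ⟨w, hzw, hwy⟩
  exact ⟨fun he => Converges.of_rel T h1 forward_step he ht,
    fun htc => Converges.of_rel (flip T) (fun a b ha hba => h3 b a hba ha) backward_step htc ht⟩
end

section
/- The term rewrite system encoding the diagrams of the unified cpT transformation is non-terminating: the rewrite relation generated by the rules cpT(SRlbeta(x)) → SRlbeta(cpT(x)), cpT(SRlll(x)) → SRlll(cpT(x)), cpT(SRcp(x)) → SRcp(cpT(x)), cpT(SRcp(x)) → SRcp(cpT(cpT(x))), and cpT(SRlbeta(x)) → SRcp(SRlbeta(x)) admits an infinite rewrite sequence (for example starting from the term cpT(cpT(SRlbeta(y)))). -/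
/-- First-order terms over the signature with unary symbols
`cpT, SRlbeta, SRcp, SRlll` and variables. -/
inductive CTm : Type where
  | var : ℕ → CTm
  | cpT : CTm → CTm
  | SRlbeta : CTm → CTm
  | SRcp : CTm → CTm
  | SRlll : CTm → CTm

/-- Applying a substitution to a term. -/
def CTm.subst (σ : ℕ → CTm) : CTm → CTm
  | .var n => σ n
  | .cpT t => .cpT (t.subst σ)
  | .SRlbeta t => .SRlbeta (t.subst σ)
  | .SRcp t => .SRcp (t.subst σ)
  | .SRlll t => .SRlll (t.subst σ)

/-- The rules of the TRS encoding the diagrams of the unified `cpT`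
transformation (with rule variable `var 0`). -/
inductive CRule : CTm → CTm → Prop where
  | r1 : CRule (.cpT (.SRlbeta (.var 0))) (.SRlbeta (.cpT (.var 0)))
  | r2 : CRule (.cpT (.SRlll (.var 0))) (.SRlll (.cpT (.var 0)))
  | r3 : CRule (.cpT (.SRcp (.var 0))) (.SRcp (.cpT (.var 0)))
  | r4 : CRule (.cpT (.SRcp (.var 0))) (.SRcp (.cpT (.cpT (.var 0))))
  | r5 : CRule (.cpT (.SRlbeta (.var 0))) (.SRcp (.SRlbeta (.var 0)))

/-- The rewrite relation generated by the rules: closure under substitution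
and under arbitrary term contexts. -/
inductive CRw : CTm → CTm → Prop where
  | root {l r : CTm} (σ : ℕ → CTm) : CRule l r → CRw (l.subst σ) (r.subst σ)
  | cpT {t t'} : CRw t t' → CRw (.cpT t) (.cpT t')
  | SRlbeta {t t'} : CRw t t' → CRw (.SRlbeta t) (.SRlbeta t')
  | SRcp {t t'} : CRw t t' → CRw (.SRcp t) (.SRcp t')
  | SRlll {t t'} : CRw t t' → CRw (.SRlll t) (.SRlll t')

/-!
A term `t` that rewrites in one or more steps to `C[t]`, for a context `C` compatible with
rewriting, starts the infinite reduction `t →⁺ C[t] →⁺ C[C[t]] →⁺ ⋯`. Here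
`cpT (cpT (SRlbeta y)) → cpT (SRcp (SRlbeta y)) → SRcp (cpT (cpT (SRlbeta y)))`,
by `r5` below the root and then `r4` at the root.
-/

section Loop

variable {α : Type*} {r : α → α → Prop}

theorem exists_seq_of_not_acc_flip {a : α} (h : ¬Acc (flip r) a) :
    ∃ s : ℕ → α, s 0 = a ∧ ∀ n, r (s n) (s (n + 1)) := by
  have step : ∀ x : {x // ¬Acc (flip r) x}, ∃ y : {x // ¬Acc (flip r) x}, r x y := by
    rintro ⟨x, hx⟩
    by_contra! hstuck
    exact hx ⟨x, fun y hxy => by_contra fun hy => hstuck ⟨y, hy⟩ hxy⟩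
  choose next hnext using step
  refine ⟨fun n => (next^[n] ⟨a, h⟩).1, rfl, fun n => ?_⟩
  simpa only [Function.iterate_succ_apply'] using hnext _

theorem not_acc_flip_of_transGen_apply {g : α → α} (hg : ∀ a b, r a b → r (g a) (g b))
    {a : α} (hloop : Relation.TransGen r a (g a)) : ¬Acc (flip r) a := by
  intro hacc
  replace hacc : Acc (flip (Relation.TransGen r)) a :=
    Subrelation.accessible (fun h => Relation.TransGen.swap _ _ h) hacc.transGen
  induction hacc with
  | intro x _ ih => exact ih (g x) hloop (hloop.lift g hg)

end Loop

theorem CRw.transGen_cpT_cpT_SRlbeta_loop :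
    Relation.TransGen CRw (.cpT (.cpT (.SRlbeta (.var 0))))
      (.SRcp (.cpT (.cpT (.SRlbeta (.var 0))))) :=
  .tail (.single (.cpT (.root (fun _ => .var 0) .r5))) (.root (fun _ => .SRlbeta (.var 0)) .r4)

/-- the TRS encoding the diagrams of the unified `cpT`
transformation is non-terminating: there is an infinite rewrite sequence,
starting from the term `cpT (cpT (SRlbeta y))`. -/
theorem cpT_trs_nonterminating :
    ∃ f : ℕ → CTm, f 0 = .cpT (.cpT (.SRlbeta (.var 0))) ∧
      ∀ n : ℕ, CRw (f n) (f (n + 1)) :=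
  exists_seq_of_not_acc_flip <|
    not_acc_flip_of_transGen_apply (fun _ _ => CRw.SRcp) CRw.transGen_cpT_cpT_SRlbeta_loop
end
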